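/- arXiv:2412.02843 — 3 statements merged into one kernel-verified Lean document; each statement's English description precedes it below -/
import Mathlib

section
/- Any vector x^(0) ∈ ℝ^n with pairwise distinct entries, subjected to any infinite sequence of positive or negative transformations, reaches after finitely many steps a vector with at most 3 distinct entries, and remains with at most 3 distinct entries thereafter. -/
/-!
Both transformations act on the set of values of a vector through the map `v ↦ (v - m)⁺` or
`v ↦ (m - v)⁺`, so the number of distinct entries never increases and is eventually constant,
say equal to `k`. Once it is constant these maps are injective on the value set, hence strictly
monotone or antitone there, and they move every value other than the smallest and the largest
by a translation or a reflection. If `k ≥ 4`, two such interior values at distance `d > 0` thus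
persist forever. But from the first step on the entries are nonnegative, and then each step
shrinks an upper bound on them by the factor `1 - 1/n`, so all entries tend to `0`, which is
incompatible with two of them staying at distance `d`.
-/

noncomputable def meanVec {n : ℕ} (x : Fin n → ℝ) : ℝ := (∑ i, x i) / n

noncomputable def posT {n : ℕ} (x : Fin n → ℝ) : Fin n → ℝ :=
  fun i => max (x i - meanVec x) 0

noncomputable def negT {n : ℕ} (x : Fin n → ℝ) : Fin n → ℝ :=
  fun i => max (meanVec x - x i) 0

open Finset Filter Topology

def posClip (m v : ℝ) : ℝ := max (v - m) 0

def negClip (m v : ℝ) : ℝ := max (m - v) 0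

lemma posClip_monotone (m : ℝ) : Monotone (posClip m) :=
  fun _ _ h => max_le_max (by linarith) le_rfl

lemma negClip_antitone (m : ℝ) : Antitone (negClip m) :=
  fun _ _ h => max_le_max (by linarith) le_rfl

lemma posClip_eq_of_pos {m u : ℝ} (h : 0 < posClip m u) : posClip m u = u - m := by
  rw [posClip, lt_max_iff, lt_self_iff_false, or_false] at h
  exact max_eq_left h.le

lemma negClip_eq_of_pos {m u : ℝ} (h : 0 < negClip m u) : negClip m u = m - u := by
  rw [negClip, lt_max_iff, lt_self_iff_false, or_false] at h
  exact max_eq_left h.le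

def IsInterior {α : Type*} [Preorder α] (V : Finset α) (u : α) : Prop :=
  u ∈ V ∧ (∃ a ∈ V, a < u) ∧ ∃ b ∈ V, u < b

section IsInterior

variable {α β : Type*} [Preorder α] [Preorder β] [DecidableEq β] {V : Finset α} {u : α}

lemma IsInterior.image_of_strictMonoOn {f : α → β} (hf : StrictMonoOn f V)
    (hu : IsInterior V u) : IsInterior (V.image f) (f u) := by
  obtain ⟨hu, ⟨a, ha, hau⟩, b, hb, hub⟩ := hu
  exact ⟨mem_image_of_mem f hu, ⟨f a, mem_image_of_mem f ha, hf ha hu hau⟩,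
    f b, mem_image_of_mem f hb, hf hu hb hub⟩

lemma IsInterior.image_of_strictAntiOn {f : α → β} (hf : StrictAntiOn f V)
    (hu : IsInterior V u) : IsInterior (V.image f) (f u) := by
  obtain ⟨hu, ⟨a, ha, hau⟩, b, hb, hub⟩ := hu
  exact ⟨mem_image_of_mem f hu, ⟨f b, mem_image_of_mem f hb, hf hu hb hub⟩,
    f a, mem_image_of_mem f ha, hf ha hu hau⟩

end IsInterior

lemma exists_isInterior_ne {α : Type*} [LinearOrder α] {V : Finset α} (hV : 4 ≤ V.card) :
    ∃ u v, IsInterior V u ∧ IsInterior V v ∧ u ≠ v := by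
  have hne : V.Nonempty := card_pos.mp (by omega)
  have hinterior : ∀ w ∈ (V.erase (V.min' hne)).erase (V.max' hne), IsInterior V w := by
    intro w hw
    obtain ⟨hw_max, hw_min, hw⟩ : w ≠ V.max' hne ∧ w ≠ V.min' hne ∧ w ∈ V := by
      simpa only [mem_erase] using hw
    exact ⟨hw, ⟨_, V.min'_mem hne, (V.min'_le w hw).lt_of_ne' hw_min⟩,
      _, V.max'_mem hne, (V.le_max' w hw).lt_of_ne hw_max⟩
  have hcard : 1 < ((V.erase (V.min' hne)).erase (V.max' hne)).card := by
    have h₁ := V.pred_card_le_card_erase (a := V.min' hne)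
    have h₂ := (V.erase (V.min' hne)).pred_card_le_card_erase (a := V.max' hne)
    omega
  obtain ⟨u, hu, v, hv, huv⟩ := one_lt_card.mp hcard
  exact ⟨u, v, hinterior u hu, hinterior v hv, huv⟩

lemma IsInterior.image_posClip {V : Finset ℝ} {m u : ℝ} (hinj : Set.InjOn (posClip m) V)
    (hu : IsInterior V u) :
    IsInterior (V.image (posClip m)) (posClip m u) ∧ posClip m u = u - m := by
  have hf := ((posClip_monotone m).monotoneOn _).strictMonoOn_of_injOn hinj
  refine ⟨hu.image_of_strictMonoOn hf, posClip_eq_of_pos ?_⟩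
  obtain ⟨hu, ⟨a, ha, hau⟩, -⟩ := hu
  exact (le_max_right _ _).trans_lt (hf ha hu hau)

lemma IsInterior.image_negClip {V : Finset ℝ} {m u : ℝ} (hinj : Set.InjOn (negClip m) V)
    (hu : IsInterior V u) :
    IsInterior (V.image (negClip m)) (negClip m u) ∧ negClip m u = m - u := by
  have hf := ((negClip_antitone m).antitoneOn _).strictAntiOn_of_injOn hinj
  refine ⟨hu.image_of_strictAntiOn hf, negClip_eq_of_pos ?_⟩
  obtain ⟨hu, -, b, hb, hub⟩ := hu
  exact (le_max_right _ _).trans_lt (hf hu hb hub)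

noncomputable def valueSet {n : ℕ} (x : Fin n → ℝ) : Finset ℝ := univ.image x

section Transformations

variable {n : ℕ} {x y : Fin n → ℝ}

lemma valueSet_posT : valueSet (posT x) = (valueSet x).image (posClip (meanVec x)) := by
  rw [valueSet, valueSet, image_image]
  rfl

lemma valueSet_negT : valueSet (negT x) = (valueSet x).image (negClip (meanVec x)) := by
  rw [valueSet, valueSet, image_image]
  rfl

lemma card_valueSet_le_of_step (h : y = posT x ∨ y = negT x) :
    (valueSet y).card ≤ (valueSet x).card := by
  rcases h with rfl | rfl
  · rw [valueSet_posT]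
    exact card_image_le
  · rw [valueSet_negT]
    exact card_image_le

lemma exists_isInterior_of_step (h : y = posT x ∨ y = negT x)
    (hcard : (valueSet y).card = (valueSet x).card) {u v : ℝ}
    (hu : IsInterior (valueSet x) u) (hv : IsInterior (valueSet x) v) :
    ∃ u' v', IsInterior (valueSet y) u' ∧ IsInterior (valueSet y) v' ∧
      |u' - v'| = |u - v| := by
  rcases h with rfl | rfl
  · rw [valueSet_posT] at hcard ⊢
    have hinj := card_image_iff.mp hcard
    obtain ⟨hu', hu_eq⟩ := hu.image_posClip hinj
    obtain ⟨hv', hv_eq⟩ := hv.image_posClip hinj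
    exact ⟨_, _, hu', hv', by rw [hu_eq, hv_eq, sub_sub_sub_cancel_right]⟩
  · rw [valueSet_negT] at hcard ⊢
    have hinj := card_image_iff.mp hcard
    obtain ⟨hu', hu_eq⟩ := hu.image_negClip hinj
    obtain ⟨hv', hv_eq⟩ := hv.image_negClip hinj
    exact ⟨_, _, hu', hv', by rw [hu_eq, hv_eq, sub_sub_sub_cancel_left, abs_sub_comm]⟩

lemma nonneg_of_step (h : y = posT x ∨ y = negT x) (i : Fin n) : 0 ≤ y i := by
  rcases h with rfl | rfl <;> exact le_max_right _ _

lemma one_sub_one_div_nonneg (n : ℕ) : (0 : ℝ) ≤ 1 - 1 / n := by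
  rw [sub_nonneg, one_div]
  exact Nat.cast_inv_le_one n

lemma posT_le (h0 : ∀ i, 0 ≤ x i) {M : ℝ} (hM : ∀ i, x i ≤ M) (i : Fin n) :
    posT x i ≤ (1 - 1 / n) * M := by
  have hn : (0 : ℝ) < n := by exact_mod_cast i.pos
  have hmean : x i / n ≤ meanVec x :=
    div_le_div_of_nonneg_right (single_le_sum (fun j _ => h0 j) (mem_univ i)) hn.le
  refine max_le ?_ (mul_nonneg (one_sub_one_div_nonneg n) ((h0 i).trans (hM i)))
  calc x i - meanVec x ≤ (1 - 1 / n) * x i := by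
        rw [mul_comm, mul_one_sub, mul_one_div]
        linarith
    _ ≤ (1 - 1 / n) * M := mul_le_mul_of_nonneg_left (hM i) (one_sub_one_div_nonneg n)

lemma negT_le (h0 : ∀ i, 0 ≤ x i) {M : ℝ} (hM : ∀ i, x i ≤ M) (i : Fin n) :
    negT x i ≤ (1 - 1 / n) * M := by
  have hn : (1 : ℝ) ≤ n := by exact_mod_cast i.pos
  have hM0 : 0 ≤ M := (h0 i).trans (hM i)
  have hsum : ∑ j, x j ≤ x i + (n - 1) * M := by
    rw [← add_sum_erase _ _ (mem_univ i)]
    gcongr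
    calc ∑ j ∈ univ.erase i, x j ≤ (univ.erase i).card • M :=
          sum_le_card_nsmul _ _ _ fun j _ => hM j
      _ = (n - 1) * M := by
        rw [card_erase_of_mem (mem_univ i), card_univ, Fintype.card_fin, nsmul_eq_mul,
          Nat.cast_sub i.pos, Nat.cast_one]
  refine max_le ?_ (mul_nonneg (one_sub_one_div_nonneg n) hM0)
  rw [meanVec, div_sub' (by positivity), div_le_iff₀ (by positivity)]
  field_simp
  nlinarith [h0 i]

end Transformations

lemma abs_sub_le_of_mem_valueSet {n : ℕ} {x : Fin n → ℝ} (h0 : ∀ i, 0 ≤ x i) {M : ℝ}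
    (hM : ∀ i, x i ≤ M) {u v : ℝ} (hu : u ∈ valueSet x) (hv : v ∈ valueSet x) :
    |u - v| ≤ M := by
  obtain ⟨i, -, rfl⟩ := mem_image.mp hu
  obtain ⟨j, -, rfl⟩ := mem_image.mp hv
  exact abs_sub_le_of_nonneg_of_le (h0 i) (hM i) (h0 j) (hM j)

section Trajectory

variable {n : ℕ} {x : ℕ → Fin n → ℝ}

lemma antitone_card_valueSet (hstep : ∀ t, x (t + 1) = posT (x t) ∨ x (t + 1) = negT (x t)) :
    Antitone fun t => (valueSet (x t)).card :=
  antitone_nat_of_succ_le fun t => card_valueSet_le_of_step (hstep t)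

lemma nonneg_and_le_pow_mul (hstep : ∀ t, x (t + 1) = posT (x t) ∨ x (t + 1) = negT (x t))
    {T : ℕ} (h0 : ∀ i, 0 ≤ x T i) {M : ℝ} (hM : ∀ i, x T i ≤ M) (j : ℕ) :
    (∀ i, 0 ≤ x (T + j) i) ∧ ∀ i, x (T + j) i ≤ (1 - 1 / n) ^ j * M := by
  induction j with
  | zero => simpa using ⟨h0, hM⟩
  | succ j ih =>
    refine ⟨nonneg_of_step (hstep (T + j)), fun i => ?_⟩
    rw [← add_assoc, pow_succ', mul_assoc]
    rcases hstep (T + j) with h | h <;> rw [h]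
    · exact posT_le ih.1 ih.2 i
    · exact negT_le ih.1 ih.2 i

lemma exists_isInterior_of_card_eq
    (hstep : ∀ t, x (t + 1) = posT (x t) ∨ x (t + 1) = negT (x t)) {T : ℕ}
    (hcard : ∀ t ≥ T, (valueSet (x t)).card = (valueSet (x T)).card) {u v : ℝ}
    (hu : IsInterior (valueSet (x T)) u) (hv : IsInterior (valueSet (x T)) v) (j : ℕ) :
    ∃ u' v', IsInterior (valueSet (x (T + j))) u' ∧ IsInterior (valueSet (x (T + j))) v' ∧
      |u' - v'| = |u - v| := by
  induction j with
  | zero => exact ⟨u, v, hu, hv, rfl⟩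
  | succ j ih =>
    obtain ⟨u', v', hu', hv', huv'⟩ := ih
    rw [← huv']
    refine exists_isInterior_of_step (hstep (T + j)) ?_ hu' hv'
    rw [hcard (T + j + 1) (by omega), hcard (T + j) (by omega)]

lemma exists_card_valueSet_le_three
    (hstep : ∀ t, x (t + 1) = posT (x t) ∨ x (t + 1) = negT (x t)) :
    ∃ t, (valueSet (x t)).card ≤ 3 := by
  by_contra! hbig
  obtain ⟨t₀, ht₀⟩ := WellFoundedLT.antitone_chain_condition (antitone_card_valueSet hstep)
  -- one step past `t₀`, so that the entries are already nonnegative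
  set T := t₀ + 1
  have hcard : ∀ t ≥ T, (valueSet (x t)).card = (valueSet (x T)).card := fun t ht =>
    (ht₀ t (by omega)).symm.trans (ht₀ T (by omega))
  obtain ⟨u, v, hu, hv, huv⟩ := exists_isInterior_ne (hbig T)
  have hd : 0 < |u - v| := abs_pos.mpr (sub_ne_zero.mpr huv)
  have hn : (0 : ℝ) < n := by
    obtain ⟨i, -, -⟩ := mem_image.mp hu.1
    exact_mod_cast i.pos
  obtain ⟨M, hM⟩ := (Set.finite_range (x T)).bddAbove
  have hdecay : Tendsto (fun j => (1 - 1 / n : ℝ) ^ j * M) atTop (𝓝 0) := by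
    simpa using (tendsto_pow_atTop_nhds_zero_of_lt_one (one_sub_one_div_nonneg n)
      (by simpa using hn)).mul_const M
  obtain ⟨j, hj⟩ := (hdecay.eventually (gt_mem_nhds hd)).exists
  obtain ⟨u', v', hu', hv', huv'⟩ := exists_isInterior_of_card_eq hstep hcard hu hv j
  obtain ⟨h0, hle⟩ := nonneg_and_le_pow_mul hstep (nonneg_of_step (hstep t₀))
    (fun i => hM (Set.mem_range_self i)) j
  have := abs_sub_le_of_mem_valueSet h0 hle hu'.1 hv'.1
  linarith

end Trajectory

theorem eventually_stable_general {n : ℕ} (x : ℕ → Fin n → ℝ)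
    (hstep : ∀ t, x (t + 1) = posT (x t) ∨ x (t + 1) = negT (x t)) :
    ∃ t₀, ∀ t ≥ t₀, (Finset.image (x t) Finset.univ).card ≤ 3 := by
  obtain ⟨t₀, ht₀⟩ := exists_card_valueSet_le_three hstep
  exact ⟨t₀, fun t ht => (antitone_card_valueSet hstep ht).trans ht₀⟩

/-- Any vector with pairwise distinct entries, subjected to an infinite sequence of
positive or negative transformations, eventually becomes (and remains) stable,
i.e. has at most 3 distinct entries. -/
theorem eventually_stable {n : ℕ} (x : ℕ → Fin n → ℝ)
    (hdistinct : Function.Injective (x 0))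
    (hstep : ∀ t, x (t + 1) = posT (x t) ∨ x (t + 1) = negT (x t)) :
    ∃ t₀, ∀ t ≥ t₀, (Finset.image (x t) Finset.univ).card ≤ 3 :=
  eventually_stable_general x hstep
end

section
/- Let x^(0) ∈ ℝ be a 1×n row vector with strictly increasing entries, and define X^(t+1) = ReLU(W^(t+1)(X^(t) − x̄^(t))) where W^(t+1) = [I; −I] stacks the identity and its negation and x̄^(t) is the vector of column means subtracted from each column. Then for every t ≥ 1, the first and last columns of X^(t) are orthogonal: ⟨x₁^(t), x_n^(t)⟩ = 0. -/
/-- The rows of the layer-`t` batch representation, indexed by sequences of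
positive/negative transformation choices (one per layer). There are `2^t` rows
at layer `t`, encoded by `Fin t → Bool`. -/
noncomputable def tree {n : ℕ} (x0 : Fin n → ℝ) : (t : ℕ) → (Fin t → Bool) → Fin n → ℝ
  | 0, _ => x0
  | t + 1, s =>
      (if s (Fin.last t) then posT else negT) (tree x0 t (fun j => s j.castSucc))

/-!
Every row of every layer is monotone or antitone: this holds for `x0`, and `y ↦ max (y - c) 0`
is monotone, so `posT` preserves the direction of a row while `negT` reverses it. Some entry of a
row is at most its mean, hence so is the row's smallest entry, which sits at the first index of a
monotone row and at the last index of an antitone one; `posT` sends that entry to `0`. As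
`negT x = posT (-x)`, every row of a layer `t ≥ 1` has a vanishing first or last entry, so each
summand of `⟨x₁^(t), x_n^(t)⟩` is zero.
-/

section

variable {n : ℕ}

lemma exists_le_meanVec (hn : 0 < n) (x : Fin n → ℝ) : ∃ i, x i ≤ meanVec x := by
  have hsum : ∑ i, x i ≤ ∑ _i : Fin n, meanVec x := by
    simp only [meanVec, Finset.sum_const, Finset.card_univ, Fintype.card_fin, nsmul_eq_mul]
    rw [mul_div_cancel₀ _ (by positivity)]
  obtain ⟨i, -, hi⟩ := Finset.exists_le_of_sum_le ⟨⟨0, hn⟩, Finset.mem_univ _⟩ hsum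
  exact ⟨i, hi⟩

lemma meanVec_neg (x : Fin n → ℝ) : meanVec (-x) = -meanVec x := by
  simp [meanVec, neg_div]

lemma negT_eq_posT_neg (x : Fin n → ℝ) : negT x = posT (-x) := by
  ext i
  simp only [negT, posT, meanVec_neg, Pi.neg_apply, sub_neg_eq_add, neg_add_eq_sub]

lemma posT_apply_eq_zero {x : Fin n → ℝ} {i : Fin n} (h : x i ≤ meanVec x) : posT x i = 0 :=
  max_eq_right (sub_nonpos.2 h)

lemma monotone_or_antitone_neg {x : Fin n → ℝ} (h : Monotone x ∨ Antitone x) :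
    Monotone (-x) ∨ Antitone (-x) :=
  h.symm.imp Antitone.neg Monotone.neg

lemma monotone_or_antitone_posT {x : Fin n → ℝ} (h : Monotone x ∨ Antitone x) :
    Monotone (posT x) ∨ Antitone (posT x) :=
  have hrelu : Monotone fun y : ℝ => max (y - meanVec x) 0 :=
    fun _ _ hab => max_le_max (sub_le_sub_right hab _) le_rfl
  h.imp hrelu.comp hrelu.comp_antitone

lemma monotone_or_antitone_negT {x : Fin n → ℝ} (h : Monotone x ∨ Antitone x) :
    Monotone (negT x) ∨ Antitone (negT x) := by
  rw [negT_eq_posT_neg]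
  exact monotone_or_antitone_posT (monotone_or_antitone_neg h)

lemma posT_first_mul_last_eq_zero (hn : 0 < n) {x : Fin n → ℝ} (h : Monotone x ∨ Antitone x) :
    posT x ⟨0, hn⟩ * posT x ⟨n - 1, Nat.sub_lt hn one_pos⟩ = 0 := by
  obtain ⟨i, hi⟩ := exists_le_meanVec hn x
  rcases h with hmono | hanti
  · have hfirst : x ⟨0, hn⟩ ≤ x i := hmono (Fin.le_def.2 (Nat.zero_le _))
    rw [posT_apply_eq_zero (hfirst.trans hi), zero_mul]
  · have hlast : x ⟨n - 1, Nat.sub_lt hn one_pos⟩ ≤ x i :=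
      hanti (Fin.le_def.2 (Nat.le_sub_one_of_lt i.isLt))
    rw [posT_apply_eq_zero (hlast.trans hi), mul_zero]

lemma negT_first_mul_last_eq_zero (hn : 0 < n) {x : Fin n → ℝ} (h : Monotone x ∨ Antitone x) :
    negT x ⟨0, hn⟩ * negT x ⟨n - 1, Nat.sub_lt hn one_pos⟩ = 0 := by
  rw [negT_eq_posT_neg]
  exact posT_first_mul_last_eq_zero hn (monotone_or_antitone_neg h)

lemma tree_monotone_or_antitone {x0 : Fin n → ℝ} (hx0 : Monotone x0) :
    ∀ t s, Monotone (tree x0 t s) ∨ Antitone (tree x0 t s)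
  | 0, _ => Or.inl hx0
  | t + 1, s => by
    have h := tree_monotone_or_antitone hx0 t (fun j => s j.castSucc)
    rw [tree]
    split_ifs
    · exact monotone_or_antitone_posT h
    · exact monotone_or_antitone_negT h

end

/-- The first and last columns of `X^(t)` are orthogonal, for every `t ≥ 1`. -/
theorem first_last_columns_orthogonal {n : ℕ} (hn : 0 < n) (x0 : Fin n → ℝ)
    (hmono : StrictMono x0) :
    ∀ t ≥ 1,
      ∑ s : Fin t → Bool,
        tree x0 t s ⟨0, hn⟩ * tree x0 t s ⟨n - 1, Nat.sub_lt hn one_pos⟩ = 0 := by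
  intro t ht
  obtain ⟨t, rfl⟩ := Nat.exists_eq_add_of_le' ht
  refine Finset.sum_eq_zero fun s _ => ?_
  have h := tree_monotone_or_antitone hmono.monotone t (fun j => s j.castSucc)
  rw [tree]
  split_ifs
  · exact posT_first_mul_last_eq_zero hn h
  · exact negT_first_mul_last_eq_zero hn h
end

section
/- Let X^(t) be an invariant representation under RC+ReLU with batch size n, let W be d×k with i.i.d. N(0, σ²) entries with σ² = 2α/d and α = n²/(n² − 2n + 2), and set X^(t+1) = ReLU(WX^(t) − μ^(t)) with μ^(t) the mean of the columns of WX^(t). Then E‖x₁^(t+1)‖² = 1 and E‖ReLU(Wν_c − μ^(t))‖² = 1/(n−1)², and x₁^(t+1) · ReLU(Wν_c − μ^(t)) = 0 almost surely. -/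
/-!
With `u = x₁ - ν` and `μ = W m` for the batch mean `m = x₁/n + (n-1)ν/n`, the two centred
preactivations are `W x₁ - μ = ((n-1)/n) W u` and `W ν - μ = -(1/n) W u`: opposite multiples of
the same vector, so the two ReLU outputs never fire in the same coordinate. Each row of `W u` is
a centred Gaussian combination with second moment `σ² ‖u‖² = σ² (1 + 1/(n-1)²)`, and its law is
symmetric, so `E ReLU(g)² = E g² / 2`. Summing over the `d` rows and inserting `σ² = 2α/d`, the
choice of `α` cancels exactly the factor `(n² - 2n + 2)/n²`.
-/

open MeasureTheory ProbabilityTheory Matrix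

section Symmetric
variable {Ω : Type*} [MeasurableSpace Ω] {P : Measure Ω} {X : Ω → ℝ}

lemma max_zero_sq_add_max_zero_sq_neg (a : ℝ) : max a 0 ^ 2 + max (-a) 0 ^ 2 = a ^ 2 := by
  rcases le_total a 0 with h | h
  · rw [max_eq_right h, max_eq_left (neg_nonneg.mpr h)]; ring
  · rw [max_eq_left h, max_eq_right (neg_nonpos.mpr h)]; ring

lemma integrable_max_zero_sq (hX : AEStronglyMeasurable X P)
    (hX2 : Integrable (fun ω ↦ X ω ^ 2) P) : Integrable (fun ω ↦ max (X ω) 0 ^ 2) P := by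
  refine hX2.mono' (by fun_prop) (.of_forall fun ω ↦ ?_)
  rw [Real.norm_of_nonneg (sq_nonneg _), ← max_zero_sq_add_max_zero_sq_neg (X ω)]
  exact le_add_of_nonneg_right (sq_nonneg _)

theorem integral_max_zero_sq_of_identDistrib_neg (hX : IdentDistrib X (-X) P P)
    (hX2 : Integrable (fun ω ↦ X ω ^ 2) P) :
    ∫ ω, max (X ω) 0 ^ 2 ∂P = (∫ ω, X ω ^ 2 ∂P) / 2 := by
  have hswap : ∫ ω, max (-X ω) 0 ^ 2 ∂P = ∫ ω, max (X ω) 0 ^ 2 ∂P :=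
    (hX.comp (by fun_prop : Measurable fun a : ℝ ↦ max a 0 ^ 2)).integral_eq.symm
  have hX2' : Integrable (fun ω ↦ max (X ω) 0 ^ 2) P :=
    integrable_max_zero_sq hX.aemeasurable_fst.aestronglyMeasurable hX2
  have hnegX2 : Integrable (fun ω ↦ max (-X ω) 0 ^ 2) P :=
    integrable_max_zero_sq hX.aemeasurable_fst.neg.aestronglyMeasurable (by simpa using hX2)
  have hsum := integral_add hX2' hnegX2
  simp only [max_zero_sq_add_max_zero_sq_neg, hswap] at hsum
  linarith

end Symmetric

section GaussianMatrix
variable {ι κ : Type*} [Fintype ι] [Fintype κ] {v : NNReal}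

lemma identDistrib_neg_pi_gaussianReal :
    IdentDistrib (fun w : κ → ℝ ↦ w) (fun w ↦ -w)
      (Measure.pi fun _ ↦ gaussianReal 0 v) (Measure.pi fun _ ↦ gaussianReal 0 v) := by
  refine ⟨aemeasurable_id, measurable_neg.aemeasurable, ?_⟩
  have := Measure.pi_map_pi (μ := fun _ : κ ↦ gaussianReal 0 v) (f := fun _ x ↦ -x)
    (fun _ ↦ measurable_neg.aemeasurable)
  simp only [gaussianReal_map_neg, neg_zero] at this
  rw [Measure.map_id']
  exact this.symm

lemma memLp_mul_const_gaussianReal (c : ℝ) : MemLp (fun t ↦ t * c) 2 (gaussianReal 0 v) :=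
  (memLp_id_gaussianReal 2).mul_const c

lemma memLp_dotProduct_pi_gaussianReal (y : κ → ℝ) :
    MemLp (fun w ↦ w ⬝ᵥ y) 2 (Measure.pi fun _ ↦ gaussianReal 0 v) :=
  memLp_finsetSum _ fun j _ ↦ (memLp_mul_const_gaussianReal (y j)).comp_measurePreserving
    (measurePreserving_eval _ j)

lemma integral_dotProduct_sq_pi_gaussianReal (y : κ → ℝ) :
    ∫ w, (w ⬝ᵥ y) ^ 2 ∂(Measure.pi fun _ ↦ gaussianReal 0 v) = v * ∑ j, y j ^ 2 := by
  have hmean : ∫ w, w ⬝ᵥ y ∂(Measure.pi fun _ ↦ gaussianReal 0 v) = 0 := by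
    simp only [dotProduct]
    rw [integral_finsetSum _ fun j _ ↦ (integrable_eval IsGaussian.integrable_id).mul_const _]
    simp [integral_mul_const, integral_eval]
  rw [← variance_of_integral_eq_zero (memLp_dotProduct_pi_gaussianReal y).aemeasurable hmean]
  have := variance_sum_pi (μ := fun _ : κ ↦ gaussianReal 0 v) (X := fun j t ↦ t * y j)
    fun j ↦ memLp_mul_const_gaussianReal (y j)
  convert this using 2
  · ext w; simp [dotProduct]
  · simp [variance_mul_const, Finset.mul_sum]

theorem integral_max_zero_dotProduct_sq_pi_gaussianReal (y : κ → ℝ) :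
    ∫ w, max (w ⬝ᵥ y) 0 ^ 2 ∂(Measure.pi fun _ ↦ gaussianReal 0 v) = v * (∑ j, y j ^ 2) / 2 := by
  have hsymm : IdentDistrib (fun w : κ → ℝ ↦ w ⬝ᵥ y) (-fun w ↦ w ⬝ᵥ y)
      (Measure.pi fun _ ↦ gaussianReal 0 v) (Measure.pi fun _ ↦ gaussianReal 0 v) := by
    have := (identDistrib_neg_pi_gaussianReal (v := v)).comp
      (u := fun w : κ → ℝ ↦ w ⬝ᵥ y) (by fun_prop)
    simp only [Function.comp_def, neg_dotProduct] at this
    exact this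
  rw [integral_max_zero_sq_of_identDistrib_neg hsymm
    (memLp_dotProduct_pi_gaussianReal y).integrable_sq, integral_dotProduct_sq_pi_gaussianReal]

theorem integral_sum_max_zero_mulVec_sq_pi_gaussianReal (y : κ → ℝ) :
    ∫ W : ι → κ → ℝ, ∑ r, max ((Matrix.of W *ᵥ y) r) 0 ^ 2
      ∂(Measure.pi fun _ ↦ Measure.pi fun _ ↦ gaussianReal 0 v)
      = Fintype.card ι * (v * ∑ j, y j ^ 2) / 2 := by
  have hmulVec (W : ι → κ → ℝ) (r : ι) : (of W *ᵥ y) r = W r ⬝ᵥ y := rfl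
  simp only [hmulVec]
  have hintegrable (r : ι) : Integrable (fun W : ι → κ → ℝ ↦ max (W r ⬝ᵥ y) 0 ^ 2)
      (Measure.pi fun _ ↦ Measure.pi fun _ ↦ gaussianReal 0 v) :=
    integrable_comp_eval (μ := fun _ : ι ↦ Measure.pi fun _ : κ ↦ gaussianReal 0 v) (i := r)
      (f := fun w ↦ max (w ⬝ᵥ y) 0 ^ 2) (integrable_max_zero_sq (by fun_prop)
      (memLp_dotProduct_pi_gaussianReal y).integrable_sq)
  have hintegral (r : ι) : ∫ W : ι → κ → ℝ, max (W r ⬝ᵥ y) 0 ^ 2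
      ∂(Measure.pi fun _ ↦ Measure.pi fun _ ↦ gaussianReal 0 v) = v * (∑ j, y j ^ 2) / 2 := by
    rw [integral_comp_eval (μ := fun _ : ι ↦ Measure.pi fun _ : κ ↦ gaussianReal 0 v) (i := r)
      (f := fun w ↦ max (w ⬝ᵥ y) 0 ^ 2) (by fun_prop),
      integral_max_zero_dotProduct_sq_pi_gaussianReal]
  rw [integral_finsetSum _ fun r _ ↦ hintegrable r]
  simp only [hintegral, Finset.sum_const, Finset.card_univ, nsmul_eq_mul]
  ring

end GaussianMatrix

lemma max_mul_zero_mul_max_mul_zero_of_mul_nonpos {c₁ c₂ : ℝ} (hc : c₁ * c₂ ≤ 0) (a : ℝ) :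
    max (c₁ * a) 0 * max (c₂ * a) 0 = 0 := by
  rcases le_total (c₁ * a) 0 with h₁ | h₁
  · rw [max_eq_right h₁, zero_mul]
  · rcases le_total (c₂ * a) 0 with h₂ | h₂
    · rw [max_eq_right h₂, mul_zero]
    · rw [max_eq_left h₁, max_eq_left h₂]
      have : c₁ * a * (c₂ * a) = c₁ * c₂ * a ^ 2 := by ring
      exact le_antisymm (this ▸ mul_nonpos_of_nonpos_of_nonneg hc (sq_nonneg a))
        (mul_nonneg h₁ h₂)

lemma sum_sq_smul_sub_of_sum_mul_eq_zero {κ : Type*} [Fintype κ] {a b : κ → ℝ}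
    (h : ∑ j, a j * b j = 0) (c : ℝ) :
    ∑ j, (c • (a - b)) j ^ 2 = c ^ 2 * (∑ j, a j ^ 2 + ∑ j, b j ^ 2) := by
  calc ∑ j, (c • (a - b)) j ^ 2 = c ^ 2 * ∑ j, (a j ^ 2 + b j ^ 2 - 2 * (a j * b j)) := by
        rw [Finset.mul_sum]
        refine Finset.sum_congr rfl fun j _ ↦ ?_
        simp only [Pi.smul_apply, Pi.sub_apply, smul_eq_mul]
        ring
    _ = c ^ 2 * (∑ j, a j ^ 2 + ∑ j, b j ^ 2) := by
        rw [Finset.sum_sub_distrib, Finset.sum_add_distrib, ← Finset.mul_sum, h, mul_zero,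
          sub_zero]

section Centering
variable {ι E : Type*} [Fintype ι] [AddCommGroup E] [Module ℝ E]
  {x : ι → E} {i₀ : ι} {ν : E}

lemma sum_eq_add_smul_of_forall_ne (hx : ∀ i, i ≠ i₀ → x i = ν) :
    ∑ i, x i = x i₀ + ((Fintype.card ι : ℝ) - 1) • ν := by
  classical
  rw [← Finset.add_sum_erase _ _ (Finset.mem_univ i₀),
    Finset.sum_congr rfl fun i hi ↦ hx i (Finset.ne_of_mem_erase hi), Finset.sum_const,
    Finset.card_erase_of_mem (Finset.mem_univ i₀), Finset.card_univ, ← Nat.cast_smul_eq_nsmul ℝ,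
    Nat.cast_pred (Fintype.card_pos_iff.mpr ⟨i₀⟩)]

lemma sub_inv_card_smul_sum_of_forall_ne (hx : ∀ i, i ≠ i₀ → x i = ν) :
    x i₀ - (Fintype.card ι : ℝ)⁻¹ • ∑ i, x i
        = (((Fintype.card ι : ℝ) - 1) / Fintype.card ι) • (x i₀ - ν) ∧
      ν - (Fintype.card ι : ℝ)⁻¹ • ∑ i, x i = (-1 / Fintype.card ι : ℝ) • (x i₀ - ν) := by
  have hN : (Fintype.card ι : ℝ) ≠ 0 := Nat.cast_ne_zero.mpr (Fintype.card_pos_iff.mpr ⟨i₀⟩).ne'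
  rw [sum_eq_add_smul_of_forall_ne hx]
  constructor
  · match_scalars <;> field_simp
  · match_scalars <;> field_simp; ring

end Centering

theorem invariant_representation_stable_general {k n d : ℕ} (hn : 2 ≤ n) (hd : 0 < d)
    (x : Fin n → Fin k → ℝ) (ν : Fin k → ℝ) (i₀ : Fin n)
    (hx₁norm : ∑ j, (x i₀ j) ^ 2 = 1)
    (hνnorm : ∑ j, (ν j) ^ 2 = 1 / ((n : ℝ) - 1) ^ 2)
    (horth : ∑ j, x i₀ j * ν j = 0)
    (hclust : ∀ i : Fin n, i ≠ i₀ → x i = ν)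
    (α : ℝ) (hα : α = (n : ℝ) ^ 2 / ((n : ℝ) ^ 2 - 2 * n + 2))
    (v : NNReal) (hv : (v : ℝ) = 2 * α / d)
    (μW : (Fin d → Fin k → ℝ) → Fin d → ℝ)
    (hμW : ∀ W, μW W = ((n : ℝ)⁻¹) • ∑ i, (Matrix.of W).mulVec (x i)) :
    (∫ W : Fin d → Fin k → ℝ,
        ∑ r, (max (((Matrix.of W).mulVec (x i₀) - μW W) r) 0) ^ 2
        ∂(Measure.pi fun _ : Fin d => Measure.pi fun _ : Fin k => gaussianReal 0 v)
      = 1) ∧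
    (∫ W : Fin d → Fin k → ℝ,
        ∑ r, (max (((Matrix.of W).mulVec ν - μW W) r) 0) ^ 2
        ∂(Measure.pi fun _ : Fin d => Measure.pi fun _ : Fin k => gaussianReal 0 v)
      = 1 / ((n : ℝ) - 1) ^ 2) ∧
    (∀ W : Fin d → Fin k → ℝ,
      ∑ r, max (((Matrix.of W).mulVec (x i₀) - μW W) r) 0 *
            max (((Matrix.of W).mulVec ν - μW W) r) 0 = 0) := by
  have hn' : (2 : ℝ) ≤ n := by exact_mod_cast hn
  have hn₀ : (n : ℝ) ≠ 0 := by positivity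
  have hn₁ : (n : ℝ) - 1 ≠ 0 := by linarith
  have hd' : (d : ℝ) ≠ 0 := by positivity
  have hαD : α * ((n : ℝ) ^ 2 - 2 * n + 2) = n ^ 2 := by
    rw [hα, div_mul_cancel₀ _ (by nlinarith)]
  set m := (n : ℝ)⁻¹ • ∑ i, x i
  obtain ⟨hx₁, hν⟩ : x i₀ - m = (((n : ℝ) - 1) / n) • (x i₀ - ν) ∧
      ν - m = (-1 / n : ℝ) • (x i₀ - ν) := by
    simpa using sub_inv_card_smul_sum_of_forall_ne hclust
  have hpre (y : Fin k → ℝ) (W : Fin d → Fin k → ℝ) : of W *ᵥ y - μW W = of W *ᵥ (y - m) := by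
    rw [hμW, mulVec_sub, mulVec_smul, mulVec_sum]
  have hsq (c : ℝ) : ∑ j, (c • (x i₀ - ν)) j ^ 2 = c ^ 2 * (1 + 1 / ((n : ℝ) - 1) ^ 2) := by
    rw [sum_sq_smul_sub_of_sum_mul_eq_zero horth, hx₁norm, hνnorm]
  refine ⟨?_, ?_, fun W ↦ Finset.sum_eq_zero fun r _ ↦ ?_⟩
  · simp only [hpre, hx₁, integral_sum_max_zero_mulVec_sq_pi_gaussianReal, Fintype.card_fin,
      hsq, hv]
    field_simp
    linear_combination hαD
  · simp only [hpre, hν, integral_sum_max_zero_mulVec_sq_pi_gaussianReal, Fintype.card_fin,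
      hsq, hv]
    field_simp
    linear_combination hαD
  · rw [hpre, hpre, hx₁, hν, mulVec_smul, mulVec_smul]
    refine max_mul_zero_mul_max_mul_zero_of_mul_nonpos (mul_nonpos_of_nonneg_of_nonpos ?_ ?_) _
    · exact div_nonneg (by linarith) (by positivity)
    · exact div_nonpos_of_nonpos_of_nonneg (by norm_num) (by positivity)

/-- Stability of the invariant representation under a random ReLU + recentering layer
with appropriately scaled Gaussian weights. -/
theorem invariant_representation_stable {k n d : ℕ} (hn : 2 ≤ n) (hd : 0 < d)
    (x : Fin n → Fin k → ℝ) (ν : Fin k → ℝ) (i₀ : Fin n) (hi₀ : (i₀ : ℕ) = 0)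
    (hν : ν = (((n : ℝ) - 1)⁻¹) • ∑ i ∈ Finset.univ.filter (fun i : Fin n => i ≠ i₀), x i)
    (hx₁norm : ∑ j, (x i₀ j) ^ 2 = 1)
    (hνnorm : ∑ j, (ν j) ^ 2 = 1 / ((n : ℝ) - 1) ^ 2)
    (horth : ∑ j, x i₀ j * ν j = 0)
    (hclust : ∀ i : Fin n, i ≠ i₀ → x i = ν)
    (α : ℝ) (hα : α = (n : ℝ) ^ 2 / ((n : ℝ) ^ 2 - 2 * n + 2))
    (v : NNReal) (hv : (v : ℝ) = 2 * α / d)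
    (μW : (Fin d → Fin k → ℝ) → Fin d → ℝ)
    (hμW : ∀ W, μW W = ((n : ℝ)⁻¹) • ∑ i, (Matrix.of W).mulVec (x i)) :
    (∫ W : Fin d → Fin k → ℝ,
        ∑ r, (max (((Matrix.of W).mulVec (x i₀) - μW W) r) 0) ^ 2
        ∂(Measure.pi fun _ : Fin d => Measure.pi fun _ : Fin k => gaussianReal 0 v)
      = 1) ∧
    (∫ W : Fin d → Fin k → ℝ,
        ∑ r, (max (((Matrix.of W).mulVec ν - μW W) r) 0) ^ 2
        ∂(Measure.pi fun _ : Fin d => Measure.pi fun _ : Fin k => gaussianReal 0 v)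
      = 1 / ((n : ℝ) - 1) ^ 2) ∧
    (∀ W : Fin d → Fin k → ℝ,
      ∑ r, max (((Matrix.of W).mulVec (x i₀) - μW W) r) 0 *
            max (((Matrix.of W).mulVec ν - μW W) r) 0 = 0) :=
  invariant_representation_stable_general hn hd x ν i₀ hx₁norm hνnorm horth hclust α hα v hv μW hμW
end
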